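/- arXiv:math/0405587 — 2 statements merged into one kernel-verified Lean document; each statement's English description precedes it below -/
import Mathlib

section
/- Let 0 < a < 1, x > 0, y > 0 with max{y, x, ay/x} < 1, and define the weights α(0,0) := x, α(i,0) := 1 (i ≥ 1), α(0,j) := a (j ≥ 1), α(i,j) := 1 (i,j ≥ 1), β(0,0) := y, β(i,0) := ay/x (i ≥ 1), β(i,j) := 1 (j ≥ 1). Then the following two conditions hold simultaneously — (a) the six-point-test matrix M(k) is positive semidefinite for every k ∈ ℤ₊², and (b) there is NO Borel probability measure μ on [0,1]² with ∬ s^{k₁} dμ = x² (k₁ ≥ 1), ∬ t^{k₂} dμ = y² (k₂ ≥ 1), ∬ s^{k₁}t^{k₂} dμ = a²y² (k₁, k₂ ≥ 1) — if and only if x > a and √( (1−x²)/(1−a²) ) < y ≤ x √( (1−x²)/(x² + a⁴ − 2a²x²) ). -/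
/-!
Hyponormality only constrains the base point `k = (0, 0)`: at every other `k` the Six-point
matrix is diagonal with entries among `1 - a²`, `1 - (ay/x)²` and `0`, while at `(0, 0)` it is
positive semidefinite exactly when `y² (x² + a⁴ - 2a²x²) ≤ x² (1 - x²)`.

For subnormality: on `[0, 1]²`, `s ^ k → 1_{s = 1}` boundedly, so moments that are constant in
the exponent are masses. A representing measure thus has `μ{s = 1} = x²`, `μ{t = 1} = y²` and
`μ{s = t = 1} = a²y²`, and inclusion–exclusion forces `x² + y² - a²y² ≤ 1`. Conversely, under
this inequality a measure on the four corners of the square represents the moments. Comparing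
the two inequalities gives `a < x`.
-/

open MeasureTheory Filter Topology

/-- The 2×2 matrix of the Six-point Test at base point `k` for a 2-variable
weighted shift with weight families `α`, `β`. -/
def sixPointMatrix (α β : ℕ × ℕ → ℝ) (k : ℕ × ℕ) : Matrix (Fin 2) (Fin 2) ℝ :=
  !![α (k.1 + 1, k.2) ^ 2 - α k ^ 2,
     α (k.1, k.2 + 1) * β (k.1 + 1, k.2) - α k * β k;
     α (k.1, k.2 + 1) * β (k.1 + 1, k.2) - α k * β k,
     β (k.1, k.2 + 1) ^ 2 - β k ^ 2]

theorem Matrix.posSemidef_two_iff {A B C : ℝ} :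
    !![A, B; B, C].PosSemidef ↔ 0 ≤ A ∧ 0 ≤ C ∧ B ^ 2 ≤ A * C := by
  refine ⟨fun h ↦ ⟨by simpa using h.diag_nonneg (i := 0), by simpa using h.diag_nonneg (i := 1),
    ?_⟩, fun ⟨hA, hC, hB⟩ ↦ Matrix.posSemidef_iff_dotProduct_mulVec.2 ⟨?_, fun v ↦ ?_⟩⟩
  · have := h.det_nonneg
    rw [Matrix.det_fin_two_of] at this
    linarith
  · ext i j
    fin_cases i <;> fin_cases j <;> rfl
  · simp only [star_trivial, dotProduct, Matrix.mulVec, Fin.sum_univ_two, Matrix.of_apply,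
      Matrix.cons_val', Matrix.cons_val_zero, Matrix.cons_val_one, Matrix.empty_val',
      Matrix.cons_val_fin_one]
    set Q := v 0 * (A * v 0 + B * v 1) + v 1 * (B * v 0 + C * v 1)
    have hQ : 0 ≤ (A + C) * Q := by
      have : (A + C) * Q = (A * v 0 + B * v 1) ^ 2 + (B * v 0 + C * v 1) ^ 2
          + (A * C - B ^ 2) * (v 0 ^ 2 + v 1 ^ 2) := by ring
      rw [this]
      have := sub_nonneg.2 hB
      positivity
    rcases (add_nonneg hA hC).eq_or_lt with h | h
    · have hB0 : B = 0 := by nlinarith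
      simp [Q, hB0, show A = 0 by linarith, show C = 0 by linarith]
    · exact nonneg_of_mul_nonneg_right (by linarith) h

theorem sixPointMatrix_posSemidef_iff {a x y : ℝ} (ha₀ : 0 < a) (ha₁ : a < 1) (hx : 0 < x)
    (hy : 0 < y) (hx₁ : x < 1) (hy₁ : y < 1) (hayx : a * y / x < 1) {α β : ℕ × ℕ → ℝ}
    (hα : ∀ i j : ℕ, α (i, j) = if i = 0 then (if j = 0 then x else a) else 1)
    (hβ : ∀ i j : ℕ, β (i, j) = if j = 0 then (if i = 0 then y else a * y / x) else 1) :
    (∀ k, (sixPointMatrix α β k).PosSemidef) ↔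
      y ^ 2 * (x ^ 2 + a ^ 4 - 2 * a ^ 2 * x ^ 2) ≤ x ^ 2 * (1 - x ^ 2) := by
  have hB : (a * (a * y / x) - x * y) ^ 2 * x ^ 2 = y ^ 2 * (a ^ 2 - x ^ 2) ^ 2 := by
    field_simp
  have h00 : (sixPointMatrix α β (0, 0)).PosSemidef ↔
      y ^ 2 * (x ^ 2 + a ^ 4 - 2 * a ^ 2 * x ^ 2) ≤ x ^ 2 * (1 - x ^ 2) := by
    simp only [sixPointMatrix, zero_add, hα, hβ, one_ne_zero, ↓reduceIte, one_pow,
      Matrix.posSemidef_two_iff, sub_nonneg]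
    rw [and_iff_right (pow_le_one₀ hx.le hx₁.le), and_iff_right (pow_le_one₀ hy.le hy₁.le),
      ← mul_le_mul_iff_of_pos_right (pow_pos hx 2), hB]
    constructor <;> intro h <;> linarith
  refine ⟨fun h ↦ h00.1 (h (0, 0)), fun h ↦ ?_⟩
  rintro ⟨_ | i, _ | j⟩
  · exact h00.2 h
  · simpa [sixPointMatrix, hα, hβ, Matrix.posSemidef_two_iff, abs_le] using ⟨by linarith, ha₁.le⟩
  · have : 0 < a * y / x := by positivity
    simpa [sixPointMatrix, hα, hβ, Matrix.posSemidef_two_iff, abs_le] using ⟨by linarith, hayx.le⟩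
  · simp [sixPointMatrix, hα, hβ, Matrix.posSemidef_two_iff]

theorem measureReal_setOf_eq_one_of_integral_pow_eq {Ω : Type*} [MeasurableSpace Ω]
    {μ : Measure Ω} [IsFiniteMeasure μ] {g : Ω → ℝ} (hg : Measurable g)
    (hg01 : ∀ᵐ ω ∂μ, g ω ∈ Set.Icc (0 : ℝ) 1) {c : ℝ}
    (hc : ∀ k : ℕ, 1 ≤ k → ∫ ω, g ω ^ k ∂μ = c) :
    μ.real {ω | g ω = 1} = c := by
  have hlim : Tendsto (fun k : ℕ ↦ ∫ ω, g ω ^ (k + 1) ∂μ) atTop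
      (𝓝 (μ.real {ω | g ω = 1})) := by
    have hA : MeasurableSet {ω | g ω = 1} := hg (measurableSet_singleton 1)
    rw [← integral_indicator_one hA]
    refine tendsto_integral_of_dominated_convergence (fun _ ↦ 1)
      (fun k ↦ (hg.pow_const _).aestronglyMeasurable) (integrable_const 1) (fun k ↦ ?_) ?_
    · filter_upwards [hg01] with ω ⟨h0, h1⟩
      rw [Real.norm_of_nonneg (pow_nonneg h0 _)]
      exact pow_le_one₀ h0 h1
    · filter_upwards [hg01] with ω ⟨h0, h1⟩
      rcases h1.eq_or_lt with h | h
      · simp [h]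
      · rw [Set.indicator_of_notMem (s := {ω | g ω = 1}) h.ne]
        exact (tendsto_pow_atTop_nhds_zero_of_lt_one h0 h).comp (tendsto_add_atTop_nat 1)
  exact tendsto_nhds_unique hlim (tendsto_const_nhds.congr fun k ↦ (hc (k + 1) k.succ_pos).symm)

def IsRepresentingMeasure (u v w : ℝ) (μ : Measure (ℝ × ℝ)) : Prop :=
  IsProbabilityMeasure μ ∧ μ (Set.Icc (0 : ℝ) 1 ×ˢ Set.Icc (0 : ℝ) 1)ᶜ = 0 ∧
    (∀ k₁ : ℕ, 1 ≤ k₁ → ∫ p, p.1 ^ k₁ ∂μ = u) ∧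
    (∀ k₂ : ℕ, 1 ≤ k₂ → ∫ p, p.2 ^ k₂ ∂μ = v) ∧
    (∀ k₁ k₂ : ℕ, 1 ≤ k₁ → 1 ≤ k₂ → ∫ p, p.1 ^ k₁ * p.2 ^ k₂ ∂μ = w)

namespace IsRepresentingMeasure

variable {u v w : ℝ} {μ : Measure (ℝ × ℝ)}

theorem ae_mem_unitSquare (h : IsRepresentingMeasure u v w μ) :
    ∀ᵐ p ∂μ, p.1 ∈ Set.Icc (0 : ℝ) 1 ∧ p.2 ∈ Set.Icc (0 : ℝ) 1 :=
  ae_iff.2 h.2.1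

theorem measureReal_fst_eq_one (h : IsRepresentingMeasure u v w μ) :
    μ.real {p | p.1 = 1} = u :=
  have := h.1
  measureReal_setOf_eq_one_of_integral_pow_eq measurable_fst
    (h.ae_mem_unitSquare.mono fun _ hp ↦ hp.1) h.2.2.1

theorem measureReal_snd_eq_one (h : IsRepresentingMeasure u v w μ) :
    μ.real {p | p.2 = 1} = v :=
  have := h.1
  measureReal_setOf_eq_one_of_integral_pow_eq measurable_snd
    (h.ae_mem_unitSquare.mono fun _ hp ↦ hp.2) h.2.2.2.1

theorem measureReal_fst_eq_one_inter_snd_eq_one (h : IsRepresentingMeasure u v w μ) :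
    μ.real ({p | p.1 = 1} ∩ {p | p.2 = 1}) = w := by
  have := h.1
  have hcorner : {p : ℝ × ℝ | p.1 * p.2 = 1} =ᵐ[μ] ({p | p.1 = 1} ∩ {p | p.2 = 1} : Set _) := by
    rw [eventuallyEq_set]
    filter_upwards [h.ae_mem_unitSquare] with p ⟨⟨hs0, hs1⟩, ht0, ht1⟩
    change p.1 * p.2 = 1 ↔ p.1 = 1 ∧ p.2 = 1
    constructor
    · intro hst
      constructor <;> nlinarith
    · rintro ⟨hs, ht⟩
      rw [hs, ht, one_mul]
  rw [← measureReal_congr hcorner]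
  refine measureReal_setOf_eq_one_of_integral_pow_eq (measurable_fst.mul measurable_snd) ?_ ?_
  · filter_upwards [h.ae_mem_unitSquare] with p ⟨⟨hs0, hs1⟩, ht0, ht1⟩
    exact ⟨mul_nonneg hs0 ht0, mul_le_one₀ hs1 ht0 ht1⟩
  · intro k hk
    simpa only [Pi.mul_apply, mul_pow] using h.2.2.2.2 k k hk hk

end IsRepresentingMeasure

noncomputable def cornerMeasure (u v w : ℝ) : Measure (ℝ × ℝ) :=
  Measure.sum fun i : Fin 4 ↦ ENNReal.ofReal (![1 - u - v + w, u - w, v - w, w] i) •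
    Measure.dirac (![(0, 0), (1, 0), (0, 1), (1, 1)] i)

theorem integral_cornerMeasure {u v w : ℝ} (hw : 0 ≤ w) (hwu : w ≤ u) (hwv : w ≤ v)
    (huv : u + v - w ≤ 1) (f : ℝ × ℝ → ℝ) :
    ∫ p, f p ∂cornerMeasure u v w =
      (1 - u - v + w) * f (0, 0) + (u - w) * f (1, 0) + (v - w) * f (0, 1) + w * f (1, 1) := by
  rw [cornerMeasure, integral_sum_dirac fun _ ↦ ENNReal.ofReal_ne_top, tsum_fintype,
    Fin.sum_univ_four]
  simp [ENNReal.toReal_ofReal, hw, sub_nonneg.2 hwu, sub_nonneg.2 hwv,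
    show 0 ≤ 1 - u - v + w by linarith]

theorem isRepresentingMeasure_cornerMeasure {u v w : ℝ} (hw : 0 ≤ w) (hwu : w ≤ u)
    (hwv : w ≤ v) (huv : u + v - w ≤ 1) : IsRepresentingMeasure u v w (cornerMeasure u v w) := by
  have hS : MeasurableSet (Set.Icc (0 : ℝ) 1 ×ˢ Set.Icc (0 : ℝ) 1)ᶜ :=
    (measurableSet_Icc.prod measurableSet_Icc).compl
  refine ⟨⟨?_⟩, ?_, fun k hk ↦ ?_, fun k hk ↦ ?_, fun k l hk hl ↦ ?_⟩
  · rw [cornerMeasure, Measure.sum_apply _ MeasurableSet.univ, tsum_fintype, Fin.sum_univ_four]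
    simp only [Measure.smul_apply, measure_univ, smul_eq_mul, mul_one, Matrix.cons_val_zero,
      Matrix.cons_val_one, Matrix.cons_val_two, Matrix.cons_val_three, Matrix.head_cons,
      Matrix.tail_cons]
    rw [← ENNReal.ofReal_add (by linarith) (by linarith),
      ← ENNReal.ofReal_add (by linarith) (by linarith), ← ENNReal.ofReal_add (by linarith) hw]
    ring_nf
    exact ENNReal.ofReal_one
  · rw [cornerMeasure, Measure.sum_apply _ hS, tsum_fintype, Fin.sum_univ_four]
    simp
  all_goals rw [integral_cornerMeasure hw hwu hwv huv]
  · simp [show k ≠ 0 by omega]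
  · simp [show k ≠ 0 by omega]
  · simp [show k ≠ 0 by omega, show l ≠ 0 by omega]

theorem exists_isRepresentingMeasure_iff {u v w : ℝ} :
    (∃ μ, IsRepresentingMeasure u v w μ) ↔ 0 ≤ w ∧ w ≤ u ∧ w ≤ v ∧ u + v - w ≤ 1 := by
  refine ⟨fun ⟨μ, h⟩ ↦ ?_, fun ⟨hw, hwu, hwv, huv⟩ ↦
    ⟨_, isRepresentingMeasure_cornerMeasure hw hwu hwv huv⟩⟩
  have := h.1
  rw [← h.measureReal_fst_eq_one, ← h.measureReal_snd_eq_one,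
    ← h.measureReal_fst_eq_one_inter_snd_eq_one]
  refine ⟨measureReal_nonneg, measureReal_mono Set.inter_subset_left,
    measureReal_mono Set.inter_subset_right, ?_⟩
  have := measureReal_union_add_inter (μ := μ) (s := {p : ℝ × ℝ | p.1 = 1})
    (t := {p | p.2 = 1}) (measurableSet_eq_fun measurable_snd measurable_const)
  linarith [measureReal_le_one (μ := μ) (s := {p : ℝ × ℝ | p.1 = 1} ∪ {p | p.2 = 1})]

/-- The second family of 2-variable weighted shifts (Figure 3) is jointly
hyponormal and not subnormal exactly when `x > a` and
`√((1−x²)/(1−a²)) < y ≤ x√((1−x²)/(x²+a⁴−2a²x²))`. -/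
theorem stmt13 (a x y : ℝ) (ha₀ : 0 < a) (ha₁ : a < 1) (hx : 0 < x) (hy : 0 < y)
    (hx₁ : x < 1) (hy₁ : y < 1) (hayx : a * y / x < 1)
    (α β : ℕ × ℕ → ℝ)
    (hα : ∀ i j : ℕ, α (i, j) = if i = 0 then (if j = 0 then x else a) else 1)
    (hβ : ∀ i j : ℕ, β (i, j) = if j = 0 then (if i = 0 then y else a * y / x) else 1) :
    ((∀ k : ℕ × ℕ, (sixPointMatrix α β k).PosSemidef) ∧
      ¬ ∃ μ : Measure (ℝ × ℝ), IsProbabilityMeasure μ ∧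
        μ (Set.Icc (0 : ℝ) 1 ×ˢ Set.Icc (0 : ℝ) 1)ᶜ = 0 ∧
        (∀ k₁ : ℕ, 1 ≤ k₁ → ∫ p, p.1 ^ k₁ ∂μ = x ^ 2) ∧
        (∀ k₂ : ℕ, 1 ≤ k₂ → ∫ p, p.2 ^ k₂ ∂μ = y ^ 2) ∧
        (∀ k₁ k₂ : ℕ, 1 ≤ k₁ → 1 ≤ k₂ →
          ∫ p, p.1 ^ k₁ * p.2 ^ k₂ ∂μ = a ^ 2 * y ^ 2)) ↔
      (a < x ∧ Real.sqrt ((1 - x ^ 2) / (1 - a ^ 2)) < y ∧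
        y ≤ x * Real.sqrt ((1 - x ^ 2) / (x ^ 2 + a ^ 4 - 2 * a ^ 2 * x ^ 2))) := by
  set D := x ^ 2 + a ^ 4 - 2 * a ^ 2 * x ^ 2
  have ha₂ : a ^ 2 < 1 := pow_lt_one₀ ha₀.le ha₁ two_ne_zero
  have hx₂ : x ^ 2 < 1 := pow_lt_one₀ hx.le hx₁ two_ne_zero
  have hD : 0 < D := by nlinarith [sq_nonneg (x ^ 2 - a ^ 2), mul_pos (pow_pos hx 2) (sub_pos.2 hx₂)]
  have hay : a * y < x := (div_lt_one hx).1 hayx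
  have hsqrt₁ : √((1 - x ^ 2) / (1 - a ^ 2)) < y ↔ 1 - x ^ 2 < y ^ 2 * (1 - a ^ 2) := by
    rw [Real.sqrt_lt' hy, div_lt_iff₀ (sub_pos.2 ha₂)]
  have hsqrt₂ : y ≤ x * √((1 - x ^ 2) / D) ↔ y ^ 2 * D ≤ x ^ 2 * (1 - x ^ 2) := by
    have hx_sqrt : x * √((1 - x ^ 2) / D) = √(x ^ 2 * ((1 - x ^ 2) / D)) := by
      rw [Real.sqrt_mul (sq_nonneg x), Real.sqrt_sq hx.le]
    rw [hx_sqrt, Real.le_sqrt' hy, mul_div_assoc', le_div_iff₀ hD]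
  have hnonsub : ¬ (0 ≤ a ^ 2 * y ^ 2 ∧ a ^ 2 * y ^ 2 ≤ x ^ 2 ∧ a ^ 2 * y ^ 2 ≤ y ^ 2 ∧
      x ^ 2 + y ^ 2 - a ^ 2 * y ^ 2 ≤ 1) ↔ 1 - x ^ 2 < y ^ 2 * (1 - a ^ 2) := by
    have h₀ : 0 ≤ a ^ 2 * y ^ 2 := by positivity
    have hwu : a ^ 2 * y ^ 2 ≤ x ^ 2 := by nlinarith [mul_pos ha₀ hy]
    have hwv : a ^ 2 * y ^ 2 ≤ y ^ 2 := by nlinarith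
    simp only [h₀, hwu, hwv, true_and, not_le]
    constructor <;> intro h <;> linarith
  rw [hsqrt₁, hsqrt₂]
  refine (and_congr (sixPointMatrix_posSemidef_iff ha₀ ha₁ hx hy hx₁ hy₁ hayx hα hβ)
    (exists_isRepresentingMeasure_iff.not.trans hnonsub)).trans
    ⟨fun ⟨hhyp, hsub⟩ ↦ ⟨?_, hsub, hhyp⟩, fun ⟨_, hsub, hhyp⟩ ↦ ⟨hhyp, hsub⟩⟩
  have : a ^ 2 * a ^ 2 < a ^ 2 * x ^ 2 := by nlinarith
  exact lt_of_pow_lt_pow_left₀ 2 hx.le (lt_of_mul_lt_mul_left this (sq_nonneg a))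
end

section
/- Let {ξ_n}_{n≥1} be a strictly increasing sequence with 0 < ξ_n < 1 for all n, and let ν be a Borel probability measure on (0,1] such that ∫ s^n dν(s) = ξ₁²ξ₂²⋯ξ_n² for all n ≥ 1 and such that s ↦ 1/s² is ν-integrable. Set ξ_e := (∫ (1/s) dν(s))^{−1/2}. Let a satisfy √(ξ_e²/2) < a ≤ √((ξ_e² + ξ_e⁴)/2) and a ≤ ξ_e^{−1}(∫ (1/s²) dν(s))^{−1/2}, and set b := √(2a² − ξ_e²). Define weights α(0,0) := a, α(1,0) := ξ_e, α(i,0) := ξ_{i−1} for i ≥ 2, α(0,1) := b, α(0,j) := ξ_{j−1} b / ξ_e for j ≥ 2, α(i,j) := ξ_i for i,j ≥ 1, and β(i,j) := α(j,i). Then: (a) the six-point-test matrix M(k) is positive semidefinite for every k ∈ ℤ₊²; (b) p := ξ_e²ξ₁⁴ + 4a²b²ξ₁² − b²ξ₁⁴ − a²b²ξ_e² − a²b⁴ − 2a²ξ₁⁴ = −2(ξ₁² − a²)²(2a² − ξ_e²) < 0; and (c) there is NO Borel probability measure μ on [0,1]² such that ∬ s^{k₁} t^{k₂} dμ(s,t)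 = γ_k for all k ∈ ℤ₊², where γ_k := α(0,0)²⋯α(k₁−1,0)²·β(k₁,0)²⋯β(k₁,k₂−1)² are the moments of the weight family (α,β). -/
open MeasureTheory

lemma Matrix.posSemidef_fin_two_of_sq_le {p q r : ℝ} (hp : 0 ≤ p) (hr : 0 ≤ r)
    (hq : q ^ 2 ≤ p * r) : (!![p, q; q, r] : Matrix (Fin 2) (Fin 2) ℝ).PosSemidef := by
  refine (Matrix.posSemidef_iff_dotProduct_mulVec).2 ⟨?_, fun x => ?_⟩
  · ext i j
    fin_cases i <;> fin_cases j <;> rfl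
  · simp only [Matrix.mulVec, dotProduct, Fin.sum_univ_two, Matrix.of_apply, Matrix.cons_val',
      Matrix.cons_val_zero, Matrix.cons_val_one, Matrix.empty_val', Matrix.cons_val_fin_one,
      star_trivial]
    have hsum_sq : (p + r) * (x 0 * (p * x 0 + q * x 1) + x 1 * (q * x 0 + r * x 1)) =
        (p * x 0 + q * x 1) ^ 2 + (q * x 0 + r * x 1) ^ 2 +
          (p * r - q ^ 2) * (x 0 ^ 2 + x 1 ^ 2) := by
      ring
    rcases (add_nonneg hp hr).eq_or_lt with hpr | hpr
    · have hp0 : p = 0 := by linarith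
      have hr0 : r = 0 := by linarith
      have hq0 : q = 0 := by subst hp0; simpa using hq
      simp [hp0, hq0, hr0]
    · refine nonneg_of_mul_nonneg_right (a := p + r) ?_ hpr
      rw [hsum_sq]
      have hdisc := sub_nonneg.2 hq
      positivity

lemma sixPointMatrix_swap {α β : ℕ × ℕ → ℝ} (hβ : ∀ k, β k = α (k.2, k.1)) (i j : ℕ) :
    sixPointMatrix α β (j, i) =
      (sixPointMatrix α β (i, j)).submatrix (Equiv.swap 0 1) (Equiv.swap 0 1) := by
  ext r s
  fin_cases r <;> fin_cases s <;> simp [sixPointMatrix, hβ, mul_comm]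

lemma sixPointMatrix_posSemidef_swap {α β : ℕ × ℕ → ℝ} (hβ : ∀ k, β k = α (k.2, k.1))
    {i j : ℕ} (h : (sixPointMatrix α β (i, j)).PosSemidef) :
    (sixPointMatrix α β (j, i)).PosSemidef := by
  rw [sixPointMatrix_swap hβ]
  exact h.submatrix _

noncomputable def thirdFamilyWeight (ξ : ℕ → ℝ) (ξe a b : ℝ) (k : ℕ × ℕ) : ℝ :=
  if k.2 = 0 then (if k.1 = 0 then a else if k.1 = 1 then ξe else ξ (k.1 - 1))
  else if k.1 = 0 then (if k.2 = 1 then b else ξ (k.2 - 1) * b / ξe)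
  else ξ k.1

namespace thirdFamilyWeight

variable (ξ : ℕ → ℝ) (ξe a b : ℝ)

@[simp] lemma zero_zero : thirdFamilyWeight ξ ξe a b (0, 0) = a := rfl
@[simp] lemma one_zero : thirdFamilyWeight ξ ξe a b (1, 0) = ξe := rfl
@[simp] lemma two_zero : thirdFamilyWeight ξ ξe a b (2, 0) = ξ 1 := rfl
@[simp] lemma add_two_zero (i : ℕ) : thirdFamilyWeight ξ ξe a b (i + 2, 0) = ξ (i + 1) := rfl
@[simp] lemma zero_one : thirdFamilyWeight ξ ξe a b (0, 1) = b := rfl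
@[simp] lemma zero_add_two (j : ℕ) :
    thirdFamilyWeight ξ ξe a b (0, j + 2) = ξ (j + 1) * (b / ξe) :=
  mul_div_assoc _ _ _
@[simp] lemma add_one_add_one (i j : ℕ) :
    thirdFamilyWeight ξ ξe a b (i + 1, j + 1) = ξ (i + 1) := rfl

end thirdFamilyWeight

theorem thirdFamily_sixPointMatrix_posSemidef {ξ : ℕ → ℝ} {ξe a b : ℝ}
    (hξ_nonneg : ∀ n, 1 ≤ n → 0 ≤ ξ n) (hξ_le_one : ∀ n, 1 ≤ n → ξ n ≤ 1)
    (hξ_mono : ∀ n, 1 ≤ n → ξ n ≤ ξ (n + 1)) (hξe : ξe ≠ 0) (hξeξ : ξe ^ 2 ≤ ξ 1 ^ 2)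
    (ha : a ^ 2 ≤ ξe ^ 2) (hb : b ^ 2 = 2 * a ^ 2 - ξe ^ 2) (hbξe : b ^ 2 ≤ ξe ^ 4) (k : ℕ × ℕ) :
    (sixPointMatrix (thirdFamilyWeight ξ ξe a b)
      (fun k => thirdFamilyWeight ξ ξe a b (k.2, k.1)) k).PosSemidef := by
  have hsq_mono : ∀ n, 1 ≤ n → ξ n ^ 2 ≤ ξ (n + 1) ^ 2 := fun n hn =>
    pow_le_pow_left₀ (hξ_nonneg n hn) (hξ_mono n hn) 2
  have hsq_le_one : ∀ n, 1 ≤ n → ξ n ^ 2 ≤ 1 := fun n hn =>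
    pow_le_one₀ (hξ_nonneg n hn) (hξ_le_one n hn)
  obtain ⟨c, rfl⟩ : ∃ c, b = c * ξe := ⟨b / ξe, (div_mul_cancel₀ _ hξe).symm⟩
  have hc : c ^ 2 ≤ ξe ^ 2 :=
    le_of_mul_le_mul_right (by linarith) (by positivity : 0 < ξe ^ 2)
  have hc1 : c ^ 2 ≤ 1 := hc.trans (hξeξ.trans (hsq_le_one 1 le_rfl))
  have hcξ : ∀ n, 1 ≤ n → c ^ 2 * ξ n ^ 2 ≤ ξ 1 ^ 2 := fun n hn => by
    nlinarith [hsq_le_one n hn, sq_nonneg c, sq_nonneg (ξ n)]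
  obtain ⟨i, j⟩ := k
  wlog hji : j ≤ i generalizing i j
  · exact sixPointMatrix_posSemidef_swap (fun _ => rfl) (this j i (by omega))
  rcases j with _ | j
  · rcases i with _ | _ | i
    · simp only [sixPointMatrix, zero_add, thirdFamilyWeight.zero_zero,
        thirdFamilyWeight.one_zero, thirdFamilyWeight.zero_one]
      exact Matrix.posSemidef_fin_two_of_sq_le (by linarith) (by linarith) (by nlinarith)
    · simp only [sixPointMatrix, zero_add, Nat.reduceAdd, thirdFamilyWeight.one_zero,
        thirdFamilyWeight.two_zero, thirdFamilyWeight.zero_one, thirdFamilyWeight.add_one_add_one,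
        thirdFamilyWeight.zero_add_two, mul_div_cancel_right₀ _ hξe]
      refine Matrix.posSemidef_fin_two_of_sq_le (by linarith) (by nlinarith) ?_
      nlinarith [mul_nonneg (mul_nonneg (sub_nonneg.2 hξeξ) (sq_nonneg (ξ 1))) (sub_nonneg.2 hc1)]
    · simp only [sixPointMatrix, zero_add, thirdFamilyWeight.add_two_zero,
        thirdFamilyWeight.add_one_add_one, thirdFamilyWeight.zero_add_two,
        mul_div_cancel_right₀ _ hξe]
      have hd := sub_nonneg.2 (hsq_mono (i + 1) (by omega))
      refine Matrix.posSemidef_fin_two_of_sq_le hd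
        (by nlinarith [hcξ (i + 1) (by omega)]) ?_
      nlinarith [mul_nonneg hd (sub_nonneg.2 (hcξ (i + 2) (by omega)))]
  · obtain ⟨i, rfl⟩ : ∃ i', i = i' + 1 := ⟨i - 1, by omega⟩
    simp only [sixPointMatrix, thirdFamilyWeight.add_one_add_one, sub_self]
    have hp := sub_nonneg.2 (hsq_mono (i + 1) (by omega))
    have hr := sub_nonneg.2 (hsq_mono (j + 1) (by omega))
    exact Matrix.posSemidef_fin_two_of_sq_le hp hr (by simpa using mul_nonneg hp hr)

lemma thirdFamily_p_eq {x e a b : ℝ} (hb : b ^ 2 = 2 * a ^ 2 - e ^ 2) :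
    e ^ 2 * x ^ 4 + 4 * a ^ 2 * b ^ 2 * x ^ 2 - b ^ 2 * x ^ 4 - a ^ 2 * b ^ 2 * e ^ 2 -
        a ^ 2 * b ^ 4 - 2 * a ^ 2 * x ^ 4 =
      -2 * (x ^ 2 - a ^ 2) ^ 2 * (2 * a ^ 2 - e ^ 2) := by
  linear_combination
    (4 * a ^ 2 * x ^ 2 - x ^ 4 - a ^ 2 * e ^ 2 - a ^ 2 * (b ^ 2 + 2 * a ^ 2 - e ^ 2)) * hb

lemma inv_integral_le_integral_one_div {μ : Measure ℝ} [IsProbabilityMeasure μ]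
    (hpos : ∀ᵐ x ∂μ, 0 < x) (hint : Integrable (fun x => 1 / x) μ) :
    (∫ x, x ∂μ)⁻¹ ≤ ∫ x, 1 / x ∂μ := by
  set m := ∫ x, x ∂μ
  rcases le_or_gt m 0 with hm | hm
  · exact (inv_nonpos.2 hm).trans (integral_nonneg_of_ae (by
      filter_upwards [hpos] with x hx using (one_div_pos.2 hx).le))
  have hid : Integrable (fun x : ℝ => x) μ := .of_integral_ne_zero hm.ne'
  have htangent : ∀ᵐ x ∂μ, 2 / m - x / m ^ 2 ≤ 1 / x := by
    filter_upwards [hpos] with x hx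
    have : 0 ≤ (x - m) ^ 2 / (x * m ^ 2) := by positivity
    rw [show (x - m) ^ 2 / (x * m ^ 2) = 1 / x - (2 / m - x / m ^ 2) by field_simp; ring] at this
    linarith
  calc m⁻¹ = ∫ x, (2 / m - x / m ^ 2) ∂μ := by
        rw [integral_sub (integrable_const _) (hid.div_const _), integral_div (m ^ 2),
          integral_const, probReal_univ, one_smul]
        field_simp
        ring
    _ ≤ ∫ x, 1 / x ∂μ := integral_mono_ae ((integrable_const _).sub (hid.div_const _)) hint htangent

noncomputable def extremalValue (ν : Measure ℝ) : ℝ := √(∫ s, 1 / s ∂ν)⁻¹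

section extremalValue

variable {ν : Measure ℝ} [IsProbabilityMeasure ν]

lemma integral_one_div_pos (hpos : ∀ᵐ x ∂ν, 0 < x) (hint : Integrable (fun x => 1 / x) ν)
    (hm : 0 < ∫ x, x ∂ν) : 0 < ∫ x, 1 / x ∂ν :=
  (inv_pos.2 hm).trans_le (inv_integral_le_integral_one_div hpos hint)

lemma extremalValue_pos (hpos : ∀ᵐ x ∂ν, 0 < x) (hint : Integrable (fun x => 1 / x) ν)
    (hm : 0 < ∫ x, x ∂ν) : 0 < extremalValue ν :=
  Real.sqrt_pos.2 (inv_pos.2 (integral_one_div_pos hpos hint hm))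

lemma extremalValue_sq_le (hpos : ∀ᵐ x ∂ν, 0 < x) (hint : Integrable (fun x => 1 / x) ν)
    (hm : 0 < ∫ x, x ∂ν) : extremalValue ν ^ 2 ≤ ∫ x, x ∂ν := by
  rw [extremalValue, Real.sq_sqrt (inv_pos.2 (integral_one_div_pos hpos hint hm)).le]
  exact inv_le_of_inv_le₀ hm (inv_integral_le_integral_one_div hpos hint)

end extremalValue

lemma integrable_one_div_of_integrable_one_div_sq {μ : Measure ℝ}
    (hμ : ∀ᵐ x ∂μ, x ∈ Set.Ioc (0 : ℝ) 1) (hint : Integrable (fun x => 1 / x ^ 2) μ) :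
    Integrable (fun x => 1 / x) μ := by
  refine hint.mono (by fun_prop) ?_
  filter_upwards [hμ] with x ⟨hx0, hx1⟩
  rw [Real.norm_of_nonneg (by positivity), Real.norm_of_nonneg (by positivity)]
  exact one_div_le_one_div_of_le (by positivity) (by nlinarith)

lemma Continuous.integrable_of_ae_mem_compact {X : Type*} [TopologicalSpace X]
    [T2Space X] [MeasurableSpace X] [OpensMeasurableSpace X] {μ : Measure X}
    [IsFiniteMeasureOnCompacts μ]
    {s : Set X} (hs : IsCompact s) (hμ : ∀ᵐ x ∂μ, x ∈ s) {f : X → ℝ} (hf : Continuous f) :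
    Integrable f μ := by
  rw [← Measure.restrict_eq_self_of_ae_mem hμ]
  exact hf.continuousOn.integrableOn_compact hs

lemma integral_monomial_mul_sq_add_sub {μ : Measure (ℝ × ℝ)} {γ : ℕ × ℕ → ℝ}
    (hint : ∀ i j, Integrable (fun p : ℝ × ℝ => p.1 ^ i * p.2 ^ j) μ)
    (hγ : ∀ k : ℕ × ℕ, ∫ p, p.1 ^ k.1 * p.2 ^ k.2 ∂μ = γ k) (c : ℝ) (i j : ℕ) :
    ∫ p, p.1 ^ i * p.2 ^ j * (p.1 + p.2 - c) ^ 2 ∂μ =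
      γ (i + 2, j) + γ (i, j + 2) + 2 * γ (i + 1, j + 1)
        - 2 * c * (γ (i + 1, j) + γ (i, j + 1)) + c ^ 2 * γ (i, j) := by
  have hexpand : (fun p : ℝ × ℝ => p.1 ^ i * p.2 ^ j * (p.1 + p.2 - c) ^ 2) = fun p =>
      p.1 ^ (i + 2) * p.2 ^ j + p.1 ^ i * p.2 ^ (j + 2) + 2 * (p.1 ^ (i + 1) * p.2 ^ (j + 1))
        - 2 * c * (p.1 ^ (i + 1) * p.2 ^ j + p.1 ^ i * p.2 ^ (j + 1))
        + c ^ 2 * (p.1 ^ i * p.2 ^ j) := by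
    funext p; ring
  rw [hexpand, integral_add, integral_sub, integral_add, integral_add, integral_const_mul,
    integral_const_mul, integral_add, integral_const_mul]
  · simp only [← hγ]
  all_goals fun_prop

lemma integral_mul_eq_zero_of_integral_sq_eq_zero {X : Type*} [MeasurableSpace X] {μ : Measure X}
    {f : X → ℝ} (hf : Integrable (fun x => f x ^ 2) μ) (h : ∫ x, f x ^ 2 ∂μ = 0) (g : X → ℝ) :
    ∫ x, g x * f x ^ 2 ∂μ = 0 := by
  have hzero := (integral_eq_zero_iff_of_nonneg (fun x => sq_nonneg (f x)) hf).1 h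
  refine integral_eq_zero_of_ae ?_
  filter_upwards [hzero] with x hx
  simp [show f x ^ 2 = 0 from hx]

def shiftMoment (α β : ℕ × ℕ → ℝ) (k : ℕ × ℕ) : ℝ :=
  (∏ i ∈ Finset.range k.1, α (i, 0) ^ 2) * ∏ j ∈ Finset.range k.2, β (k.1, j) ^ 2

theorem thirdFamily_not_subnormal {ξ : ℕ → ℝ} {ξe a b : ℝ} (hξe : ξe ≠ 0) (ha : a ≠ 0)
    (hb0 : b ≠ 0) (hb : b ^ 2 = 2 * a ^ 2 - ξe ^ 2) (hξ1 : 0 < ξ 1) (hξ12 : ξ 1 < ξ 2) :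
    ¬ ∃ μ : Measure (ℝ × ℝ), IsProbabilityMeasure μ ∧
        μ (Set.Icc (0 : ℝ) 1 ×ˢ Set.Icc (0 : ℝ) 1)ᶜ = 0 ∧
        ∀ k : ℕ × ℕ, ∫ p, p.1 ^ k.1 * p.2 ^ k.2 ∂μ =
          shiftMoment (thirdFamilyWeight ξ ξe a b)
            (fun k => thirdFamilyWeight ξ ξe a b (k.2, k.1)) k := by
  rintro ⟨μ, hμ, hsupp, hmom⟩
  have hint : ∀ {f : ℝ × ℝ → ℝ}, Continuous f → Integrable f μ :=
    Continuous.integrable_of_ae_mem_compact (isCompact_Icc.prod isCompact_Icc) (mem_ae_iff.2 hsupp)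
  have hexpand := integral_monomial_mul_sq_add_sub (fun i j => hint (by fun_prop)) hmom (2 * a ^ 2)
  have hline : ∫ p : ℝ × ℝ, (p.1 + p.2 - 2 * a ^ 2) ^ 2 ∂μ = 0 := by
    have h := hexpand 0 0
    simp only [pow_zero, mul_one, one_mul, shiftMoment, zero_add, Finset.prod_range_succ,
      Finset.range_one, Finset.prod_singleton, thirdFamilyWeight.zero_zero,
      thirdFamilyWeight.one_zero, Finset.range_zero, Finset.prod_empty,
      thirdFamilyWeight.zero_one] at h
    rw [h]
    linear_combination 2 * a ^ 2 * hb
  have h := integral_mul_eq_zero_of_integral_sq_eq_zero (hint (by fun_prop)) hline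
    (fun p => p.1 ^ 1 * p.2 ^ 1)
  rw [hexpand 1 1] at h
  simp only [shiftMoment, Nat.reduceAdd, Finset.prod_range_succ, Finset.range_one,
    Finset.prod_singleton, thirdFamilyWeight.zero_zero, thirdFamilyWeight.one_zero,
    thirdFamilyWeight.add_two_zero, zero_add, thirdFamilyWeight.zero_add_two,
    thirdFamilyWeight.zero_one, thirdFamilyWeight.add_one_add_one] at h
  field_simp at h
  have hξ_sq : 0 < ξ 2 ^ 2 - ξ 1 ^ 2 := by nlinarith
  have hpos :
      0 < 2 * a ^ 2 * b ^ 2 * (ξ 1 ^ 2 * (ξ 2 ^ 2 - ξ 1 ^ 2) + 2 * (ξ 1 ^ 2 - a ^ 2) ^ 2) := by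
    positivity
  linarith

theorem stmt17_general (ξ : ℕ → ℝ) (ν : Measure ℝ) (hνprob : IsProbabilityMeasure ν)
    (hνsupp : ν (Set.Ioc (0 : ℝ) 1)ᶜ = 0)
    (hξpos : ∀ n : ℕ, 1 ≤ n → 0 < ξ n) (hξlt1 : ∀ n : ℕ, 1 ≤ n → ξ n < 1)
    (hξmono : ∀ n : ℕ, 1 ≤ n → ξ n < ξ (n + 1))
    (hmom : ∀ n : ℕ, 1 ≤ n → ∫ s, s ^ n ∂ν = ∏ i ∈ Finset.Icc 1 n, ξ i ^ 2)
    (hint : Integrable (fun s => 1 / s ^ 2) ν)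
    (ξe : ℝ) (hξe : ξe = Real.sqrt (∫ s, 1 / s ∂ν)⁻¹)
    (a b : ℝ)
    (ha₁ : Real.sqrt (ξe ^ 2 / 2) < a)
    (ha₂ : a ≤ Real.sqrt ((ξe ^ 2 + ξe ^ 4) / 2))
    (hb : b = Real.sqrt (2 * a ^ 2 - ξe ^ 2))
    (α β : ℕ × ℕ → ℝ)
    (hα : ∀ i j : ℕ, α (i, j) =
      if j = 0 then (if i = 0 then a else if i = 1 then ξe else ξ (i - 1))
      else if i = 0 then (if j = 1 then b else ξ (j - 1) * b / ξe)
      else ξ i)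
    (hβ : ∀ k : ℕ × ℕ, β k = α (k.2, k.1))
    (γ : ℕ × ℕ → ℝ)
    (hγ : ∀ k : ℕ × ℕ, γ k =
      (∏ i ∈ Finset.range k.1, α (i, 0) ^ 2) * ∏ j ∈ Finset.range k.2, β (k.1, j) ^ 2) :
    (∀ k : ℕ × ℕ, (sixPointMatrix α β k).PosSemidef) ∧
    (ξe ^ 2 * ξ 1 ^ 4 + 4 * a ^ 2 * b ^ 2 * ξ 1 ^ 2 - b ^ 2 * ξ 1 ^ 4 -
        a ^ 2 * b ^ 2 * ξe ^ 2 - a ^ 2 * b ^ 4 - 2 * a ^ 2 * ξ 1 ^ 4 =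
      -2 * (ξ 1 ^ 2 - a ^ 2) ^ 2 * (2 * a ^ 2 - ξe ^ 2) ∧
     ξe ^ 2 * ξ 1 ^ 4 + 4 * a ^ 2 * b ^ 2 * ξ 1 ^ 2 - b ^ 2 * ξ 1 ^ 4 -
        a ^ 2 * b ^ 2 * ξe ^ 2 - a ^ 2 * b ^ 4 - 2 * a ^ 2 * ξ 1 ^ 4 < 0) ∧
    ¬ ∃ μ : Measure (ℝ × ℝ), IsProbabilityMeasure μ ∧
        μ (Set.Icc (0 : ℝ) 1 ×ˢ Set.Icc (0 : ℝ) 1)ᶜ = 0 ∧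
        ∀ k : ℕ × ℕ, ∫ p, p.1 ^ k.1 * p.2 ^ k.2 ∂μ = γ k := by
  have := hνprob
  have hsupp : ∀ᵐ s ∂ν, s ∈ Set.Ioc (0 : ℝ) 1 := mem_ae_iff.2 hνsupp
  have hξ1 := hξpos 1 le_rfl
  have hξ1_lt : ξ 1 ^ 2 < 1 := pow_lt_one₀ hξ1.le (hξlt1 1 le_rfl) two_ne_zero
  have hmean : ∫ s, s ∂ν = ξ 1 ^ 2 := by simpa using hmom 1 le_rfl
  have hpos : ∀ᵐ s ∂ν, 0 < s := hsupp.mono fun _ hs => hs.1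
  have hint₁ := integrable_one_div_of_integrable_one_div_sq hsupp hint
  have hm : 0 < ∫ s, s ∂ν := hmean ▸ by positivity
  have hξe_pos : 0 < ξe := hξe ▸ extremalValue_pos hpos hint₁ hm
  have hξeξ : ξe ^ 2 ≤ ξ 1 ^ 2 := hξe ▸ hmean ▸ extremalValue_sq_le hpos hint₁ hm
  have ha_pos : 0 < a := (Real.sqrt_nonneg _).trans_lt ha₁
  have ha_lo : ξe ^ 2 < 2 * a ^ 2 := by linarith [Real.lt_sq_of_sqrt_lt ha₁]
  have ha_hi : 2 * a ^ 2 ≤ ξe ^ 2 + ξe ^ 4 := by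
    linarith [(Real.le_sqrt ha_pos.le (by positivity)).1 ha₂]
  have hb2 : b ^ 2 = 2 * a ^ 2 - ξe ^ 2 := hb ▸ Real.sq_sqrt (by linarith)
  have hb_pos : 0 < b := hb ▸ Real.sqrt_pos.2 (by linarith)
  have hξe4 : ξe ^ 4 < ξe ^ 2 := by
    nlinarith [mul_lt_mul_of_pos_left (hξeξ.trans_lt hξ1_lt) (by positivity : 0 < ξe ^ 2)]
  have ha_lt : a ^ 2 < ξe ^ 2 := by linarith
  obtain rfl : β = fun k => α (k.2, k.1) := funext hβ
  obtain rfl : γ = shiftMoment α fun k => α (k.2, k.1) := funext hγ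
  obtain rfl : α = thirdFamilyWeight ξ ξe a b := funext fun k => hα k.1 k.2
  refine ⟨thirdFamily_sixPointMatrix_posSemidef (fun n hn => (hξpos n hn).le)
      (fun n hn => (hξlt1 n hn).le) (fun n hn => (hξmono n hn).le) hξe_pos.ne' hξeξ
      ha_lt.le hb2 (by linarith), ⟨thirdFamily_p_eq hb2, ?_⟩,
    thirdFamily_not_subnormal hξe_pos.ne' ha_pos.ne' hb_pos.ne' hb2 hξ1 (hξmono 1 le_rfl)⟩
  rw [thirdFamily_p_eq hb2]
  nlinarith [pow_pos (sub_pos.2 (ha_lt.trans_le hξeξ)) 2]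

/-- The third family (Figure 5) with `√(ξe²/2) < a ≤ √((ξe²+ξe⁴)/2)` and
`b = √(2a²−ξe²)` is jointly hyponormal but not subnormal. -/
theorem stmt17 (ξ : ℕ → ℝ) (ν : Measure ℝ) (hνprob : IsProbabilityMeasure ν)
    (hνsupp : ν (Set.Ioc (0 : ℝ) 1)ᶜ = 0)
    (hξpos : ∀ n : ℕ, 1 ≤ n → 0 < ξ n) (hξlt1 : ∀ n : ℕ, 1 ≤ n → ξ n < 1)
    (hξmono : ∀ n : ℕ, 1 ≤ n → ξ n < ξ (n + 1))
    (hmom : ∀ n : ℕ, 1 ≤ n → ∫ s, s ^ n ∂ν = ∏ i ∈ Finset.Icc 1 n, ξ i ^ 2)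
    (hint : Integrable (fun s => 1 / s ^ 2) ν)
    (ξe : ℝ) (hξe : ξe = Real.sqrt (∫ s, 1 / s ∂ν)⁻¹)
    (a b : ℝ)
    (ha₁ : Real.sqrt (ξe ^ 2 / 2) < a)
    (ha₂ : a ≤ Real.sqrt ((ξe ^ 2 + ξe ^ 4) / 2))
    (ha₃ : a ≤ ξe⁻¹ * Real.sqrt (∫ s, 1 / s ^ 2 ∂ν)⁻¹)
    (hb : b = Real.sqrt (2 * a ^ 2 - ξe ^ 2))
    (α β : ℕ × ℕ → ℝ)
    (hα : ∀ i j : ℕ, α (i, j) =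
      if j = 0 then (if i = 0 then a else if i = 1 then ξe else ξ (i - 1))
      else if i = 0 then (if j = 1 then b else ξ (j - 1) * b / ξe)
      else ξ i)
    (hβ : ∀ k : ℕ × ℕ, β k = α (k.2, k.1))
    (γ : ℕ × ℕ → ℝ)
    (hγ : ∀ k : ℕ × ℕ, γ k =
      (∏ i ∈ Finset.range k.1, α (i, 0) ^ 2) * ∏ j ∈ Finset.range k.2, β (k.1, j) ^ 2) :
    (∀ k : ℕ × ℕ, (sixPointMatrix α β k).PosSemidef) ∧
    (ξe ^ 2 * ξ 1 ^ 4 + 4 * a ^ 2 * b ^ 2 * ξ 1 ^ 2 - b ^ 2 * ξ 1 ^ 4 -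
        a ^ 2 * b ^ 2 * ξe ^ 2 - a ^ 2 * b ^ 4 - 2 * a ^ 2 * ξ 1 ^ 4 =
      -2 * (ξ 1 ^ 2 - a ^ 2) ^ 2 * (2 * a ^ 2 - ξe ^ 2) ∧
     ξe ^ 2 * ξ 1 ^ 4 + 4 * a ^ 2 * b ^ 2 * ξ 1 ^ 2 - b ^ 2 * ξ 1 ^ 4 -
        a ^ 2 * b ^ 2 * ξe ^ 2 - a ^ 2 * b ^ 4 - 2 * a ^ 2 * ξ 1 ^ 4 < 0) ∧
    ¬ ∃ μ : Measure (ℝ × ℝ), IsProbabilityMeasure μ ∧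
        μ (Set.Icc (0 : ℝ) 1 ×ˢ Set.Icc (0 : ℝ) 1)ᶜ = 0 ∧
        ∀ k : ℕ × ℕ, ∫ p, p.1 ^ k.1 * p.2 ^ k.2 ∂μ = γ k :=
  stmt17_general ξ ν hνprob hνsupp hξpos hξlt1 hξmono hmom hint ξe hξe a b ha₁ ha₂ hb α β hα hβ γ hγ
end
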